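/- arXiv:2007.08058 — 4 statements merged into one kernel-verified Lean document; each statement's English description precedes it below -/
import Mathlib

section
/- Let α > 1 and let Δ ≥ 3, q be integers with q - 2 ≥ α(Δ-1) + α/(2(α²-1)). Define Φ(Δ,q) = ((q-2)/(Δ-1)) · [(1 - 1/(q-Δ+1))^{q-Δ+1}]^{(Δ-1)/(q-2)}. Then Φ(Δ,q) ≥ α·e^{-1/α}. -/
set_option maxHeartbeats 1000000


/-- Φ(Δ,q) = ((q-2)/(Δ-1)) · [(1 - 1/(q-Δ+1))^{q-Δ+1}]^{(Δ-1)/(q-2)} -/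
noncomputable def Phi (Δ q : ℕ) : ℝ :=
  (((q : ℝ) - 2) / ((Δ : ℝ) - 1)) *
    ((1 - 1 / ((q : ℝ) - (Δ : ℝ) + 1)) ^ ((q : ℝ) - (Δ : ℝ) + 1)) ^
      (((Δ : ℝ) - 1) / ((q : ℝ) - 2))

lemma log_le_aux {y : ℝ} (hy : 1 ≤ y) : Real.log y ≤ (y - y⁻¹) / 2 := by
  rcases eq_or_lt_of_le hy with h | h
  · simp [← h]
  · have h0 : 0 < Real.log y := Real.log_pos h
    have h1 := Real.self_lt_sinh_iff.mpr h0
    rw [Real.sinh_log (by linarith)] at h1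
    linarith

/-- If α > 1, Δ ≥ 3 and q - 2 ≥ α(Δ-1) + α/(2(α²-1)), then Φ(Δ,q) ≥ α·e^{-1/α}. -/
theorem stmt_4 (α : ℝ) (hα : 1 < α) (Δ q : ℕ) (hΔ : 3 ≤ Δ)
    (hq : α * ((Δ : ℝ) - 1) + α / (2 * (α ^ 2 - 1)) ≤ (q : ℝ) - 2) :
    α * Real.exp (-1 / α) ≤ Phi Δ q := by
  rw [Phi]
  have hΔ3 : (3:ℝ) ≤ (Δ:ℝ) := by exact_mod_cast hΔ
  set D : ℝ := (Δ:ℝ) - 1 with hDdef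
  set Q : ℝ := (q:ℝ) - 2 with hQdef
  set m : ℝ := (q:ℝ) - (Δ:ℝ) + 1 with hmdef
  clear_value D Q m
  have hα0 : (0:ℝ) < α := by linarith
  have hα1 : (0:ℝ) < α - 1 := by linarith
  have hαsq : (0:ℝ) < α ^ 2 - 1 := by nlinarith
  have hD2 : (2:ℝ) ≤ D := by simp [hDdef]; linarith
  have hD0 : (0:ℝ) < D := by linarith
  have hδ : (0:ℝ) < α / (2 * (α ^ 2 - 1)) := by positivity
  have hQ : α * D + α / (2 * (α ^ 2 - 1)) ≤ Q := hq
  have hQ0 : (0:ℝ) < Q := by nlinarith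
  have hmQ : m = Q - D + 2 := by rw [hmdef, hQdef, hDdef]; ring
  have hm1ge : (α - 1) * D ≤ m - 1 := by
    rw [hmQ]; nlinarith
  have hm1pos : (0:ℝ) < m - 1 := by nlinarith
  have hm0 : (0:ℝ) < m := by linarith
  set r : ℝ := 1 + 1 / (2 * (m - 1)) with hrdef
  clear_value r
  have hr0 : (0:ℝ) < r := by rw [hrdef]; positivity
  -- Step 1: log inequality  exp(-(r/m)) ≤ 1 - 1/m
  have hlog : Real.log (m / (m - 1)) ≤ r / m := by
    have hy1 : (1:ℝ) ≤ m / (m - 1) := by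
      rw [le_div_iff₀ hm1pos]; linarith
    refine (log_le_aux hy1).trans_eq ?_
    rw [hrdef]
    field_simp
    ring
  have hbase : (0:ℝ) < 1 - 1 / m := by
    rw [sub_pos, div_lt_one hm0]; linarith
  have h5 : Real.exp (-(r / m)) ≤ 1 - 1 / m := by
    have he : Real.exp (-(r / m)) ≤ Real.exp (Real.log ((m - 1) / m)) := by
      rw [show ((m - 1) / m) = (m / (m - 1))⁻¹ from by rw [inv_div], Real.log_inv]
      exact Real.exp_le_exp.mpr (by linarith)
    rw [Real.exp_log (by positivity)] at he
    refine he.trans_eq ?_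
    field_simp
  -- Step 2: rpow manipulations
  have h6 : Real.exp (-r) ≤ (1 - 1 / m) ^ m := by
    have := Real.rpow_le_rpow (Real.exp_pos _).le h5 hm0.le
    refine le_trans (le_of_eq ?_) this
    rw [← Real.exp_mul]
    congr 1
    field_simp
  have hc0 : (0:ℝ) ≤ D / Q := by positivity
  have h7 : Real.exp (-(r * D / Q)) ≤ ((1 - 1 / m) ^ m) ^ (D / Q) := by
    have := Real.rpow_le_rpow (Real.exp_pos _).le h6 hc0
    refine le_trans (le_of_eq ?_) this
    rw [← Real.exp_mul]
    congr 1
    ring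
  -- Step 3: key algebraic inequality
  have hA : α * D / (2 * (m - 1)) ≤ α / (2 * (α - 1)) := by
    rw [div_le_div_iff₀ (by positivity) (by positivity)]
    nlinarith
  have hB : α / (2 * (α - 1)) ≤ (α + 1) * (Q - α * D) := by
    have he : (α + 1) * (α / (2 * (α ^ 2 - 1))) = α / (2 * (α - 1)) := by
      rw [show α ^ 2 - 1 = (α - 1) * (α + 1) from by ring]
      field_simp
    have h1 : α / (2 * (α ^ 2 - 1)) ≤ Q - α * D := by linarith
    calc α / (2 * (α - 1)) = (α + 1) * (α / (2 * (α ^ 2 - 1))) := he.symm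
      _ ≤ (α + 1) * (Q - α * D) := by
          apply mul_le_mul_of_nonneg_left h1 (by linarith)
  have hmul : α * (r * D) + D * α * α ≤ α * Q + Q := by
    have h1 : α * D / (2 * (m - 1)) ≤ (α + 1) * (Q - α * D) := hA.trans hB
    have h2 : α * (r * D) = α * D + α * D / (2 * (m - 1)) := by
      rw [hrdef]; field_simp
    have h3 : (α + 1) * (Q - α * D) = α * Q + Q - α * α * D - α * D := by ring
    nlinarith [h1, h2, h3]
  -- Step 4: exponential comparison
  have hy0 : D * α / Q ≤ 1 - (r * D / Q - 1 / α) := by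
    have e : 1 - (r * D / Q - 1 / α) - D * α / Q
        = (α * Q + Q - α * (r * D) - D * α * α) / (Q * α) := by
      field_simp
      ring
    have hnn : (0:ℝ) ≤ (α * Q + Q - α * (r * D) - D * α * α) / (Q * α) :=
      div_nonneg (by linarith) (by positivity)
    rw [← e] at hnn
    linarith
  have h3 : D * α / Q ≤ Real.exp (-(r * D / Q - 1 / α)) :=
    le_trans hy0 (by linarith [Real.add_one_le_exp (-(r * D / Q - 1 / α))])
  have h4 : Real.exp (r * D / Q - 1 / α) * (D * α / Q) ≤ 1 := by
    have := mul_le_mul_of_nonneg_left h3 (Real.exp_pos (r * D / Q - 1 / α)).le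
    rwa [← Real.exp_add, add_neg_cancel, Real.exp_zero] at this
  have h1 : Real.exp (r * D / Q - 1 / α) ≤ Q / (D * α) := by
    rw [le_div_iff₀ (by positivity)]
    have hQm := mul_le_mul_of_nonneg_right h4 hQ0.le
    calc Real.exp (r * D / Q - 1 / α) * (D * α)
        = Real.exp (r * D / Q - 1 / α) * (D * α / Q) * Q := by
          field_simp
      _ ≤ 1 * Q := hQm
      _ = Q := one_mul Q
  have hC : α * Real.exp (-1 / α) ≤ Q / D * Real.exp (-(r * D / Q)) := by
    have h2 := mul_le_mul_of_nonneg_left h1 (mul_pos hα0 (Real.exp_pos (-(r * D / Q)))).le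
    calc α * Real.exp (-1 / α)
        = α * Real.exp (-(r * D / Q)) * Real.exp (r * D / Q - 1 / α) := by
          rw [mul_assoc, ← Real.exp_add]
          congr 2
          ring
      _ ≤ α * Real.exp (-(r * D / Q)) * (Q / (D * α)) := h2
      _ = Q / D * Real.exp (-(r * D / Q)) := by
          field_simp
  calc α * Real.exp (-1 / α) ≤ Q / D * Real.exp (-(r * D / Q)) := hC
    _ ≤ Q / D * ((1 - 1 / m) ^ m) ^ (D / Q) :=
        mul_le_mul_of_nonneg_left h7 (by positivity)
end

section
/- Let ε > 0, let α* be the solution of exp(1/x)=x, let α = (1+ε)α* and β = 2 - α + α/(2(α²-1)). If Δ ≥ 3 and q are integers with q ≥ αΔ + β, then Φ(Δ,q) ≥ 1 + (1 + 1/α*)ε, where Φ(Δ,q) = ((q-2)/(Δ-1)) · [(1 - 1/(q-Δ+1))^{q-Δ+1}]^{(Δ-1)/(q-2)}. -/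
/-!
With `D = Δ - 1`, `Q = q - 2` and `m = q - Δ + 1` we have `Φ = (Q / D) * ((1 - 1 / m) ^ m) ^ (D / Q)`.
The bound `log t ≤ (t - t⁻¹) / 2` (i.e. `log t ≤ sinh (log t)`) at `t = m / (m - 1)` gives
`(1 - 1 / m) ^ m ≥ exp (-s)` with `s = 1 + 1 / (2 (m - 1))`, so `Φ ≥ x * exp (-s / x)` for `x = Q / D`.
By `log y ≤ y - 1`, `x * exp (-s / x) ≥ α * exp (-1 / α)` as soon as `α (α + s) ≤ (α + 1) x`, and the
hypothesis `q ≥ α Δ + β` is exactly strong enough for this. Finally, the tangent line of `exp` at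
`-1 / α*`, where `exp (-1 / α*) = 1 / α*`, gives `α * exp (-1 / α) ≥ 1 + (1 + 1 / α*) ε`.
-/

open Real

lemma Real.log_le_sub_inv_div_two {t : ℝ} (ht : 1 ≤ t) : log t ≤ (t - t⁻¹) / 2 := by
  rw [← sinh_log (by linarith)]
  exact self_le_sinh_iff.mpr (log_nonneg ht)

lemma Real.exp_neg_le_one_sub_inv_rpow_self {m : ℝ} (hm : 1 < m) :
    exp (-(1 + 1 / (2 * (m - 1)))) ≤ (1 - 1 / m) ^ m := by
  have hm0 : 0 < m := by linarith
  have hm1 : 0 < m - 1 := by linarith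
  have hinv : 1 - 1 / m = (m / (m - 1))⁻¹ := by field_simp
  have hlog : log (m / (m - 1)) ≤ (m / (m - 1) - (m / (m - 1))⁻¹) / 2 :=
    log_le_sub_inv_div_two (by rw [le_div_iff₀ hm1]; linarith)
  have hident : m * ((m / (m - 1) - (m / (m - 1))⁻¹) / 2) = 1 + 1 / (2 * (m - 1)) := by
    field_simp; ring
  rw [rpow_def_of_pos (by rw [hinv]; positivity), hinv, log_inv, exp_le_exp]
  linarith [mul_le_mul_of_nonneg_left hlog hm0.le]

lemma mul_exp_neg_inv_le_mul_exp_neg_div {a x s : ℝ} (ha : 0 < a) (hx : 0 < x)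
    (h : a * (a + s) ≤ (a + 1) * x) : a * exp (-(1 / a)) ≤ x * exp (-(s / x)) := by
  rw [← exp_log ha, ← exp_log hx, ← exp_add, ← exp_add, exp_le_exp, exp_log ha, exp_log hx]
  have hlog : log a - log x ≤ a / x - 1 := by
    rw [← log_div ha.ne' hx.ne']; exact log_le_sub_one_of_pos (by positivity)
  have hfrac : a / x + s / x ≤ 1 + 1 / a := by
    have hax : a * ((1 + 1 / a) * x) = (a + 1) * x := by field_simp
    rw [← add_div, div_le_iff₀ hx, ← mul_le_mul_iff_of_pos_left ha, hax]
    exact h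
  linarith

lemma mul_exp_neg_inv_le_phi {α D Q m : ℝ} (hα : 1 < α) (hD : 0 < D)
    (hQ : α * D + α / (2 * (α ^ 2 - 1)) ≤ Q) (hm : (α - 1) * D < m - 1) :
    α * exp (-(1 / α)) ≤ Q / D * ((1 - 1 / m) ^ m) ^ (D / Q) := by
  have hm1 : 0 < m - 1 := lt_of_le_of_lt (by nlinarith) hm
  have hQ0 : 0 < Q := by
    have : 0 < α / (2 * (α ^ 2 - 1)) := div_pos (by linarith) (by nlinarith)
    nlinarith
  set s := 1 + 1 / (2 * (m - 1)) with hs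
  have hpow : exp (-(s / (Q / D))) ≤ ((1 - 1 / m) ^ m) ^ (D / Q) := by
    calc exp (-(s / (Q / D))) = exp (-s) ^ (D / Q) := by
          rw [← exp_mul]; congr 1; field_simp
      _ ≤ ((1 - 1 / m) ^ m) ^ (D / Q) :=
          rpow_le_rpow (exp_pos _).le (exp_neg_le_one_sub_inv_rpow_self (by linarith))
            (div_pos hD hQ0).le
  -- the `1 / (2 * (m - 1))` correction is paid for by the `α / (2 * (α ^ 2 - 1))` slack in `Q`
  have hslack : α * (s - 1) * D ≤ (α + 1) * (α / (2 * (α ^ 2 - 1))) := by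
    have hα1 : 0 < α - 1 := by linarith
    have hlhs : α * (s - 1) * D = α * D / (2 * (m - 1)) := by rw [hs]; field_simp; ring
    have hrhs : (α + 1) * (α / (2 * (α ^ 2 - 1))) = α / (2 * (α - 1)) := by
      rw [show α ^ 2 - 1 = (α + 1) * (α - 1) by ring]; field_simp
    rw [hlhs, hrhs, div_le_div_iff₀ (by positivity) (by positivity)]
    nlinarith [mul_le_mul_of_nonneg_left hm.le (by linarith : (0:ℝ) ≤ 2 * α)]
  have hcond : α * (α + s) ≤ (α + 1) * (Q / D) := by
    rw [mul_div_assoc', le_div_iff₀ hD]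
    nlinarith
  exact (mul_exp_neg_inv_le_mul_exp_neg_div (by linarith) (div_pos hQ0 hD) hcond).trans
    (mul_le_mul_of_nonneg_left hpow (div_pos hQ0 hD).le)

lemma one_lt_of_exp_inv_eq_self {a : ℝ} (ha : exp (1 / a) = a) : 1 < a := by
  have ha0 : 0 < a := ha ▸ exp_pos _
  have := add_one_le_exp (1 / a)
  rw [ha] at this
  linarith [one_div_pos.mpr ha0]

lemma one_add_mul_le_mul_exp_neg_inv {a ε : ℝ} (ha : exp (1 / a) = a) (hε : -1 < ε) :
    1 + (1 + 1 / a) * ε ≤ (1 + ε) * a * exp (-(1 / ((1 + ε) * a))) := by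
  have ha0 : 0 < a := ha ▸ exp_pos _
  have hε0 : 0 < 1 + ε := by linarith
  have hexp : exp (-(1 / a)) = 1 / a := by rw [exp_neg, ha, one_div]
  have htangent : 1 / a * (1 / a - 1 / ((1 + ε) * a) + 1) ≤ exp (-(1 / ((1 + ε) * a))) := by
    calc 1 / a * (1 / a - 1 / ((1 + ε) * a) + 1)
        ≤ exp (-(1 / a)) * exp (1 / a - 1 / ((1 + ε) * a)) := by
          rw [hexp]; gcongr; exact add_one_le_exp _
      _ = exp (-(1 / ((1 + ε) * a))) := by rw [← exp_add]; ring_nf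
  calc 1 + (1 + 1 / a) * ε = (1 + ε) * a * (1 / a * (1 / a - 1 / ((1 + ε) * a) + 1)) := by
        field_simp; ring
    _ ≤ _ := by gcongr

theorem stmt_5_general (ε : ℝ) (hε : 0 < ε) (αstar : ℝ)
    (hfix : Real.exp (1 / αstar) = αstar)
    (α β : ℝ) (hα : α = (1 + ε) * αstar) (hβ : β = 2 - α + α / (2 * (α ^ 2 - 1)))
    (Δ q : ℕ) (hΔ : 3 ≤ Δ) (hq : α * (Δ : ℝ) + β ≤ (q : ℝ)) :
    1 + (1 + 1 / αstar) * ε ≤ Phi Δ q := by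
  have hαstar : 1 < αstar := one_lt_of_exp_inv_eq_self hfix
  have hα1 : 1 < α := by rw [hα]; nlinarith
  have hΔ' : (3 : ℝ) ≤ Δ := by exact_mod_cast hΔ
  have hc : 0 < α / (2 * (α ^ 2 - 1)) := div_pos (by linarith) (by nlinarith)
  rw [hβ] at hq
  calc 1 + (1 + 1 / αstar) * ε ≤ α * exp (-(1 / α)) := by
        rw [hα]; exact one_add_mul_le_mul_exp_neg_inv hfix (by linarith)
    _ ≤ Phi Δ q :=
        mul_exp_neg_inv_le_phi hα1 (by linarith) (by linarith) (by linarith)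

/-- For ε > 0, α = (1+ε)α*, β = 2 - α + α/(2(α²-1)): if Δ ≥ 3, q ≥ αΔ + β, then
Φ(Δ,q) ≥ 1 + (1 + 1/α*)ε, where α* is the positive solution of exp(1/x) = x. -/
theorem stmt_5 (ε : ℝ) (hε : 0 < ε) (αstar : ℝ) (hαstar : 0 < αstar)
    (hfix : Real.exp (1 / αstar) = αstar)
    (α β : ℝ) (hα : α = (1 + ε) * αstar) (hβ : β = 2 - α + α / (2 * (α ^ 2 - 1)))
    (Δ q : ℕ) (hΔ : 3 ≤ Δ) (hq : α * (Δ : ℝ) + β ≤ (q : ℝ)) :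
    1 + (1 + 1 / αstar) * ε ≤ Phi Δ q :=
  stmt_5_general ε hε αstar hfix α β hα hβ Δ q hΔ hq
end

section
/- Let μ be a probability distribution on colorings, v ≠ w vertices, k a color, and L(v) the support of σ_v with at least two elements including possibly k. Define Ĵ = max_{i ∈ L(v)\{k}} |μ(σ_w=k|σ_v=i) − μ(σ_w=k)|, Î = max_{i,j ∈ L(v)\{k}} |μ(σ_w=k|σ_v=i) − μ(σ_w=k|σ_v=j)|, I = max_{i,j ∈ L(v)} |μ(σ_w=k|σ_v=i) − μ(σ_w=k|σ_v=j)|, and P = max_{c ∈ L(v)} μ(σ_v = c). Then Ĵ ≤ (1 − P)·Î + P·I. -/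
open Finset

private lemma mem_le_biSup {α : Type*} [Fintype α] {S : Finset α} (g : α → ℝ) {i : α}
    (hi : i ∈ S) : g i ≤ ⨆ j ∈ S, g j := by
  calc g i = ⨆ (_ : i ∈ S), g i := (ciSup_pos (f := fun _ => g i) hi).symm
    _ ≤ ⨆ j ∈ S, g j :=
      le_ciSup (f := fun j => ⨆ (_ : j ∈ S), g j)
        (Set.Finite.bddAbove (Set.finite_range _)) i

private lemma biSup_le_of {α : Type*} {S : Finset α} {g : α → ℝ} {a : ℝ}
    (h : ∀ j ∈ S, g j ≤ a) (ha : 0 ≤ a) : (⨆ j ∈ S, g j) ≤ a :=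
  Real.iSup_le (fun j => Real.iSup_le (fun hj => h j hj) ha) ha

/-- Ĵ ≤ (1 − P)·Î + P·I, where for a distribution μ on colorings, v ≠ w, color k,
L(v) the support of σ_v (|L(v)| ≥ 2, L(v)\{k} nonempty):
Ĵ = max_{i ∈ L(v)\{k}} |μ(σ_w=k|σ_v=i) − μ(σ_w=k)|,
Î = max_{i,j ∈ L(v)\{k}} |μ(σ_w=k|σ_v=i) − μ(σ_w=k|σ_v=j)|,
I = max_{i,j ∈ L(v)} |μ(σ_w=k|σ_v=i) − μ(σ_w=k|σ_v=j)|,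
P = max_{c ∈ L(v)} μ(σ_v = c). -/
theorem stmt_12 {Ω V K : Type*} [Fintype Ω] [Fintype K] [DecidableEq K]
    (p : Ω → ℝ) (hp0 : ∀ ω, 0 ≤ p ω) (hp1 : ∑ ω, p ω = 1)
    (σ : Ω → V → K) (v w : V) (hvw : v ≠ w) (k : K)
    (Pr : (Ω → Prop) → ℝ)
    (hPr : ∀ (A : Ω → Prop) [DecidablePred A], Pr A = ∑ ω ∈ univ.filter A, p ω)
    (cond : K → ℝ)
    (hcond : ∀ j : K, cond j = Pr (fun ω => σ ω w = k ∧ σ ω v = j) / Pr (fun ω => σ ω v = j))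
    (Lv : Finset K) (hLv : Lv = univ.filter (fun j : K => 0 < Pr (fun ω => σ ω v = j)))
    (hcard : 2 ≤ Lv.card) (hne : (Lv \ {k}).Nonempty) :
    (⨆ i ∈ Lv \ {k}, |cond i - Pr (fun ω => σ ω w = k)|) ≤
      (1 - ⨆ c ∈ Lv, Pr (fun ω => σ ω v = c)) *
        (⨆ i ∈ Lv \ {k}, ⨆ j ∈ Lv \ {k}, |cond i - cond j|) +
      (⨆ c ∈ Lv, Pr (fun ω => σ ω v = c)) *
        (⨆ i ∈ Lv, ⨆ j ∈ Lv, |cond i - cond j|) := by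
  classical
  set m : K → ℝ := fun j => Pr (fun ω => σ ω v = j) with hm
  set jnt : K → ℝ := fun j => Pr (fun ω => σ ω w = k ∧ σ ω v = j) with hjntdef
  set Q : ℝ := Pr (fun ω => σ ω w = k) with hQdef
  set A : ℝ := ⨆ i ∈ Lv \ {k}, ⨆ j ∈ Lv \ {k}, |cond i - cond j| with hA
  set B : ℝ := ⨆ i ∈ Lv, ⨆ j ∈ Lv, |cond i - cond j| with hB
  set P : ℝ := ⨆ c ∈ Lv, m c with hP
  obtain ⟨i0, hi0⟩ := hne
  have hi0' : i0 ∈ Lv := (Finset.mem_sdiff.mp hi0).1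
  have hm0 : ∀ j, 0 ≤ m j := by
    intro j
    simp only [hm, hPr]
    exact Finset.sum_nonneg fun ω _ => hp0 ω
  have hjnt0 : ∀ j, 0 ≤ jnt j := by
    intro j
    simp only [hjntdef, hPr]
    exact Finset.sum_nonneg fun ω _ => hp0 ω
  have hjnt_le : ∀ j, jnt j ≤ m j := by
    intro j
    simp only [hjntdef, hm, hPr]
    apply Finset.sum_le_sum_of_subset_of_nonneg _ (fun ω _ _ => hp0 ω)
    intro ω hω
    simp only [Finset.mem_filter] at hω ⊢
    exact ⟨hω.1, hω.2.2⟩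
  have hmLv : ∀ j ∈ Lv, 0 < m j := by
    intro j hj
    rw [hLv] at hj
    exact (Finset.mem_filter.mp hj).2
  have hmnot : ∀ j ∉ Lv, m j = 0 := by
    intro j hj
    rw [hLv] at hj
    simp only [Finset.mem_filter, Finset.mem_univ, true_and, not_lt] at hj
    exact le_antisymm hj (hm0 j)
  have hP0 : 0 ≤ P := le_trans (hm0 i0) (mem_le_biSup m hi0')
  have hB0 : 0 ≤ B := by
    have h1 : |cond i0 - cond i0| ≤ ⨆ j ∈ Lv, |cond i0 - cond j| :=
      mem_le_biSup (fun j => |cond i0 - cond j|) hi0'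
    have h2 : (⨆ j ∈ Lv, |cond i0 - cond j|) ≤ B :=
      mem_le_biSup (fun i => ⨆ j ∈ Lv, |cond i - cond j|) hi0'
    simpa using h1.trans h2
  have hA0 : 0 ≤ A := by
    have h1 : |cond i0 - cond i0| ≤ ⨆ j ∈ Lv \ {k}, |cond i0 - cond j| :=
      mem_le_biSup (fun j => |cond i0 - cond j|) hi0
    have h2 : (⨆ j ∈ Lv \ {k}, |cond i0 - cond j|) ≤ A :=
      mem_le_biSup (fun i => ⨆ j ∈ Lv \ {k}, |cond i - cond j|) hi0
    simpa using h1.trans h2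
  have hAB : A ≤ B := by
    apply biSup_le_of _ hB0
    intro i hi
    apply biSup_le_of _ hB0
    intro j hj
    have hi' := (Finset.mem_sdiff.mp hi).1
    have hj' := (Finset.mem_sdiff.mp hj).1
    calc |cond i - cond j| ≤ ⨆ j ∈ Lv, |cond i - cond j| := mem_le_biSup (fun j => |cond i - cond j|) hj'
      _ ≤ B := mem_le_biSup (fun i => ⨆ j ∈ Lv, |cond i - cond j|) hi'
  have hP1 : P ≤ 1 := by
    apply biSup_le_of _ zero_le_one
    intro c _
    simp only [hm, hPr]
    rw [← hp1]
    exact Finset.sum_le_sum_of_subset_of_nonneg (Finset.filter_subset _ _)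
      (fun ω _ _ => hp0 ω)
  have hQsum : Q = ∑ j, jnt j := by
    simp only [hQdef, hjntdef, hPr]
    rw [← Finset.sum_fiberwise (univ.filter (fun ω => σ ω w = k)) (fun ω => σ ω v) p]
    apply Finset.sum_congr rfl
    intro j _
    apply Finset.sum_congr _ (fun _ _ => rfl)
    rw [Finset.filter_filter]
  have hjnt_zero : ∀ j ∉ Lv, jnt j = 0 := fun j hj =>
    le_antisymm (by rw [← hmnot j hj]; exact hjnt_le j) (hjnt0 j)
  have hQ : Q = ∑ j ∈ Lv, m j * cond j := by
    rw [hQsum, ← Finset.sum_subset (Finset.subset_univ Lv) (fun j _ hj => hjnt_zero j hj)]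
    apply Finset.sum_congr rfl
    intro j hj
    rw [hcond j]
    show jnt j = m j * (jnt j / m j)
    rw [mul_div_cancel₀ _ (hmLv j hj).ne']
  have hsum1 : ∑ j ∈ Lv, m j = 1 := by
    have h : ∑ j, m j = 1 := by
      simp only [hm, hPr]
      rw [← hp1, ← Finset.sum_fiberwise univ (fun ω => σ ω v) p]
    rw [← h]
    exact Finset.sum_subset (Finset.subset_univ Lv) (fun j _ hj => hmnot j hj)
  have hRHS0 : 0 ≤ (1 - P) * A + P * B := by
    have h1 : 0 ≤ 1 - P := sub_nonneg.mpr hP1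
    positivity
  apply Real.iSup_le _ hRHS0
  intro i
  apply Real.iSup_le _ hRHS0
  intro hi
  have hi' : i ∈ Lv := (Finset.mem_sdiff.mp hi).1
  have hkey : cond i - Q = ∑ j ∈ Lv, m j * (cond i - cond j) := by
    have h : ∑ j ∈ Lv, m j * (cond i - cond j)
        = (∑ j ∈ Lv, m j) * cond i - ∑ j ∈ Lv, m j * cond j := by
      rw [Finset.sum_mul, ← Finset.sum_sub_distrib]
      exact Finset.sum_congr rfl fun j _ => by ring
    rw [hQ, h, hsum1, one_mul]
  calc |cond i - Q| = |∑ j ∈ Lv, m j * (cond i - cond j)| := by rw [hkey]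
    _ ≤ ∑ j ∈ Lv, |m j * (cond i - cond j)| := Finset.abs_sum_le_sum_abs _ _
    _ = ∑ j ∈ Lv, m j * |cond i - cond j| := by
        exact Finset.sum_congr rfl fun j _ => by
          rw [abs_mul, abs_of_nonneg (hm0 j)]
    _ ≤ ∑ j ∈ Lv, m j * (if j = k then B else A) := by
        apply Finset.sum_le_sum
        intro j hj
        apply mul_le_mul_of_nonneg_left _ (hm0 j)
        by_cases hjk : j = k
        · simp only [hjk, if_pos rfl]
          calc |cond i - cond k| ≤ ⨆ j ∈ Lv, |cond i - cond j| := by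
                subst hjk; exact mem_le_biSup (fun j => |cond i - cond j|) hj
            _ ≤ B := mem_le_biSup (fun i => ⨆ j ∈ Lv, |cond i - cond j|) hi'
        · simp only [if_neg hjk]
          have hjm : j ∈ Lv \ {k} := Finset.mem_sdiff.mpr ⟨hj, by simpa using hjk⟩
          calc |cond i - cond j| ≤ ⨆ j ∈ Lv \ {k}, |cond i - cond j| :=
                mem_le_biSup (fun j => |cond i - cond j|) hjm
            _ ≤ A := mem_le_biSup (fun i => ⨆ j ∈ Lv \ {k}, |cond i - cond j|) hi
    _ ≤ (1 - P) * A + P * B := by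
        by_cases hk : k ∈ Lv
        · have hsplit := Finset.sum_eq_sum_sdiff_singleton_add hk
            (fun j => m j * (if j = k then B else A))
          have hsplit2 := Finset.sum_eq_sum_sdiff_singleton_add hk m
          have hA' : ∑ j ∈ Lv \ {k}, m j * (if j = k then B else A)
              = (∑ j ∈ Lv \ {k}, m j) * A := by
            rw [Finset.sum_mul]
            apply Finset.sum_congr rfl
            intro j hj
            have : j ≠ k := by
              have := (Finset.mem_sdiff.mp hj).2
              simpa using this
            rw [if_neg this]
          have hmkP : m k ≤ P := mem_le_biSup m hk
          rw [hsplit, hA', if_pos rfl]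
          have hs : ∑ j ∈ Lv \ {k}, m j = 1 - m k := by
            rw [hsplit2] at hsum1; linarith
          rw [hs]
          nlinarith [hm0 k, hAB]
        · have hL : Lv \ {k} = Lv := by
            apply Finset.sdiff_eq_self_of_disjoint
            simp [hk]
          have hA' : ∑ j ∈ Lv, m j * (if j = k then B else A) = A := by
            rw [show ∑ j ∈ Lv, m j * (if j = k then B else A) = ∑ j ∈ Lv, m j * A from
              Finset.sum_congr rfl fun j hj => by
                rw [if_neg (fun h => hk (by rw [← h]; exact hj))], ← Finset.sum_mul, hsum1, one_mul]
          rw [hA']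
          nlinarith [hP0, hAB]
end

section
/- Let G be a star centered at u with d ≥ 1 leaves, and suppose there are integers Δ ≥ 3 and q ≥ Δ+2 with d ≤ Δ−1, |L(u)| ≥ q − Δ + d, and |L(w)| ≥ q − Δ + 1 for every leaf w, where all lists are subsets of [q]. Let σ be a uniformly random proper list-coloring. Then for every c ∈ L(u): P(σ_u ≠ c)/P(σ_u = c) ≥ d · Φ(Δ,q), where Φ(Δ,q) = ((q−2)/(Δ−1))·[(1 − 1/(q−Δ+1))^{q−Δ+1}]^{(Δ−1)/(q−2)}. -/
open Finset

/-!
Given the colour `x` of the centre, the leaves are coloured independently, so there are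
`∏_w |L(w) \ {x}|` colourings with `σ_u = x`. Comparing with `x = c`, the `w`-th factor of the
ratio is at least `(1 - 1/|L(w)|)^[x ∈ L(w)]`. By AM–GM the sum of these products over the
`n = |L(u)| - 1` colours `x ≠ c` is at least `n` times the `n`-th root of
`∏_w (1 - 1/|L(w)|)^|L(w) ∩ (L(u) \ {c})| ≥ ∏_w (1 - 1/|L(w)|)^|L(w)| ≥ b^d`, where
`b = (1 - 1/(q-Δ+1))^(q-Δ+1)` because `(1 - 1/m)^m` increases with `m`. Finally `n ↦ n b^(d/n)`
is increasing and `n ≥ d(q-2)/(Δ-1)`, which gives `d Φ(Δ,q)`.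
-/

lemma one_sub_inv_natCast_nonneg (m : ℕ) : (0 : ℝ) ≤ 1 - 1 / m := by
  rcases Nat.eq_zero_or_pos m with rfl | hm
  · simp
  · rw [sub_nonneg, div_le_one (by exact_mod_cast hm)]; exact_mod_cast hm

lemma one_sub_inv_pow_le_succ {m : ℕ} (hm : 1 ≤ m) :
    (1 - 1 / (m : ℝ)) ^ m ≤ (1 - 1 / ((m + 1 : ℕ) : ℝ)) ^ (m + 1) := by
  have ha := one_sub_inv_natCast_nonneg m
  -- AM-GM for `m` copies of `1 - 1/m` and one copy of `1`
  have amgm := Real.geom_mean_le_arith_mean2_weighted (w₁ := m / (m + 1)) (w₂ := 1 / (m + 1))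
    (p₁ := 1 - 1 / m) (p₂ := 1) (by positivity) (by positivity) ha zero_le_one (by field_simp)
  have hmean : (m : ℝ) / (m + 1) * (1 - 1 / m) + 1 / (m + 1) * 1 =
      1 - 1 / ((m + 1 : ℕ) : ℝ) := by
    have : (m : ℝ) ≠ 0 := by positivity
    push_cast; field_simp; ring
  rw [Real.one_rpow, mul_one, hmean] at amgm
  calc (1 - 1 / (m : ℝ)) ^ m = ((1 - 1 / (m : ℝ)) ^ ((m : ℝ) / (m + 1))) ^ (m + 1) := by
        rw [← Real.rpow_natCast _ (m + 1), ← Real.rpow_mul ha, ← Real.rpow_natCast]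
        congr 1; push_cast; field_simp
    _ ≤ _ := pow_le_pow_left₀ (by positivity) amgm _

lemma one_sub_inv_pow_le_of_le {s m : ℕ} (hs : 1 ≤ s) (hsm : s ≤ m) :
    (1 - 1 / (s : ℝ)) ^ s ≤ (1 - 1 / (m : ℝ)) ^ m := by
  induction m, hsm using Nat.le_induction with
  | base => rfl
  | succ m hsm ih => exact ih.trans (one_sub_inv_pow_le_succ (hs.trans hsm))

lemma card_mul_prod_rpow_inv_le_sum {ι : Type*} {s : Finset ι} (hs : s.Nonempty) {z : ι → ℝ}
    (hz : ∀ i ∈ s, 0 ≤ z i) : #s * (∏ i ∈ s, z i) ^ (#s : ℝ)⁻¹ ≤ ∑ i ∈ s, z i := by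
  have h := Real.geom_mean_le_arith_mean s (fun _ => 1) z (fun _ _ => zero_le_one)
    (by simpa using hs) hz
  simp only [Real.rpow_one, sum_const, nsmul_eq_mul, mul_one, one_mul] at h
  rwa [le_div_iff₀ (by exact_mod_cast hs.card_pos), mul_comm] at h

lemma mul_rpow_div_le_mul_rpow_div {b a t₁ t₂ : ℝ} (hb₀ : 0 < b) (hb₁ : b ≤ 1) (ha : 0 ≤ a)
    (ht₁ : 0 < t₁) (ht : t₁ ≤ t₂) : t₁ * b ^ (a / t₁) ≤ t₂ * b ^ (a / t₂) :=
  mul_le_mul ht (Real.rpow_le_rpow_of_exponent_ge hb₀ hb₁ (div_le_div_of_nonneg_left ha ht₁ ht))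
    (by positivity) (ht₁.le.trans ht)

lemma Phi_eq {Δ q : ℕ} (h : Δ ≤ q) :
    Phi Δ q = (q - 2) / (Δ - 1) *
      ((1 - 1 / ((q - Δ + 1 : ℕ) : ℝ)) ^ (q - Δ + 1)) ^ (((q : ℝ) - 2) / (Δ - 1))⁻¹ := by
  rw [Phi, inv_div, ← Real.rpow_natCast]
  push_cast [h]
  rfl

section LeafFactor

variable {α ι : Type*} [DecidableEq α] [Fintype ι]

lemma one_sub_inv_card_pow_le_card_erase_div {L : Finset α} (hL : 2 ≤ #L) (x c : α) :
    (1 - 1 / (#L : ℝ)) ^ (if x ∈ L then 1 else 0) ≤ #(L.erase x) / #(L.erase c) := by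
  have hLc : (#(L.erase c) : ℝ) ≤ #L := by exact_mod_cast card_erase_le
  have hLc_pos : (0 : ℝ) < #(L.erase c) := by
    have := pred_card_le_card_erase (a := c) (s := L)
    exact_mod_cast (by omega : 0 < #(L.erase c))
  split_ifs with hx
  · have h1 : (1 : ℝ) ≤ #L := by exact_mod_cast (by omega : 1 ≤ #L)
    rw [pow_one, card_erase_of_mem hx, Nat.cast_sub (by omega), Nat.cast_one,
      one_sub_div (by positivity)]
    exact div_le_div_of_nonneg_left (by linarith) hLc_pos hLc
  · rw [pow_zero, erase_eq_of_notMem hx, one_le_div hLc_pos]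
    exact hLc

noncomputable def leafFactor (L : ι → Finset α) (x : α) : ℝ :=
  ∏ t, (1 - 1 / (#(L t) : ℝ)) ^ (if x ∈ L t then 1 else 0)

lemma leafFactor_nonneg (L : ι → Finset α) (x : α) : 0 ≤ leafFactor L x :=
  prod_nonneg fun _ _ => pow_nonneg (one_sub_inv_natCast_nonneg _) _

lemma leafFactor_le_prod_card_erase_div {L : ι → Finset α} (hL : ∀ t, 2 ≤ #(L t)) (x c : α) :
    leafFactor L x ≤ (∏ t, (#((L t).erase x) : ℝ)) / ∏ t, (#((L t).erase c) : ℝ) := by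
  rw [leafFactor, ← prod_div_distrib]
  exact prod_le_prod (fun _ _ => pow_nonneg (one_sub_inv_natCast_nonneg _) _)
    fun t _ => one_sub_inv_card_pow_le_card_erase_div (hL t) x c

lemma prod_one_sub_inv_pow_card_le_prod_leafFactor (E : Finset α) (L : ι → Finset α) :
    ∏ t, (1 - 1 / (#(L t) : ℝ)) ^ #(L t) ≤ ∏ x ∈ E, leafFactor L x := by
  have h0 (t : ι) := one_sub_inv_natCast_nonneg #(L t)
  simp only [leafFactor]
  rw [prod_comm]
  refine prod_le_prod (fun t _ => pow_nonneg (h0 t) _) fun t _ => ?_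
  rw [prod_pow_eq_pow_sum, sum_boole, Nat.cast_id]
  exact pow_le_pow_of_le_one (h0 t) (by simp) (card_le_card fun x hx => (mem_filter.1 hx).2)

lemma pow_le_prod_leafFactor {s : ℕ} (hs : 1 ≤ s) {L : ι → Finset α} (hL : ∀ t, s ≤ #(L t))
    (E : Finset α) : ((1 - 1 / (s : ℝ)) ^ s) ^ Fintype.card ι ≤ ∏ x ∈ E, leafFactor L x :=
  calc ((1 - 1 / (s : ℝ)) ^ s) ^ Fintype.card ι = ∏ _t : ι, (1 - 1 / (s : ℝ)) ^ s := by simp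
    _ ≤ ∏ t, (1 - 1 / (#(L t) : ℝ)) ^ #(L t) :=
      prod_le_prod (fun _ _ => pow_nonneg (one_sub_inv_natCast_nonneg s) _)
        fun t _ => one_sub_inv_pow_le_of_le hs (hL t)
    _ ≤ ∏ x ∈ E, leafFactor L x := prod_one_sub_inv_pow_card_le_prod_leafFactor E L

end LeafFactor

section StarColorings

variable {α ι : Type*} [Fintype α] [DecidableEq α] [Fintype ι] [DecidableEq ι]

def starColorings (Lu : Finset α) (Lw : ι → Finset α) : Finset (α × (ι → α)) :=
  univ.filter (fun ω => ω.1 ∈ Lu ∧ ∀ t, ω.2 t ∈ Lw t ∧ ω.2 t ≠ ω.1)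

variable {Lu : Finset α} (Lw : ι → Finset α)

lemma card_starColorings_filter_fst_eq {x : α} (hx : x ∈ Lu) :
    #((starColorings Lu Lw).filter (fun ω => ω.1 = x)) = ∏ t, #((Lw t).erase x) := by
  have hfiber : (starColorings Lu Lw).filter (fun ω => ω.1 = x) =
      {x} ×ˢ Fintype.piFinset (fun t => (Lw t).erase x) := by
    ext ⟨a, f⟩
    simp only [starColorings, mem_filter, mem_univ, true_and, mem_product, mem_singleton,
      Fintype.mem_piFinset, mem_erase]
    constructor
    · rintro ⟨⟨-, hf⟩, rfl⟩
      exact ⟨rfl, fun t => (hf t).symm⟩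
    · rintro ⟨rfl, hf⟩
      exact ⟨⟨hx, fun t => (hf t).symm⟩, rfl⟩
  rw [hfiber, card_product, card_singleton, one_mul, Fintype.card_piFinset]

lemma card_starColorings_filter_fst_ne (c : α) :
    #((starColorings Lu Lw).filter (fun ω => ω.1 ≠ c)) =
      ∑ x ∈ Lu.erase c, ∏ t, #((Lw t).erase x) := by
  rw [card_eq_sum_card_fiberwise (f := Prod.fst) (t := Lu.erase c)]
  · refine sum_congr rfl fun x hx => ?_
    rw [filter_filter, ← card_starColorings_filter_fst_eq Lw (mem_of_mem_erase hx)]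
    congr 1
    exact filter_congr fun ω _ => ⟨And.right, fun h => ⟨h ▸ ne_of_mem_erase hx, h⟩⟩
  · intro ω hω
    simp only [coe_filter, starColorings, mem_filter, mem_univ, true_and,
      Set.mem_ofPred_eq] at hω
    exact mem_erase.2 ⟨hω.2, hω.1.1⟩

lemma starColorings_ratio_eq_sum {c : α} (hc : c ∈ Lu) :
    let Ω := starColorings Lu Lw
    ((#(Ω.filter (fun ω => ω.1 ≠ c)) : ℝ) / #Ω) / ((#(Ω.filter (fun ω => ω.1 = c)) : ℝ) / #Ω) =
      ∑ x ∈ Lu.erase c, (∏ t, (#((Lw t).erase x) : ℝ)) / ∏ t, (#((Lw t).erase c) : ℝ) := by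
  intro Ω
  rw [← sum_div]
  rcases eq_or_ne (#Ω : ℝ) 0 with h | h
  · have hB : (∏ t, (#((Lw t).erase c) : ℝ)) = 0 := by
      rw [← Nat.cast_prod, ← card_starColorings_filter_fst_eq Lw hc, Nat.cast_eq_zero,
        ← Nat.le_zero]
      exact (card_filter_le _ _).trans (by exact_mod_cast h.le)
    simp [h, hB]
  · rw [div_div_div_cancel_right₀ h, card_starColorings_filter_fst_ne,
      card_starColorings_filter_fst_eq Lw hc]
    push_cast
    rfl

end StarColorings

theorem stmt_17_general (d Δ q : ℕ) (hd : 1 ≤ d) (hq : Δ + 2 ≤ q)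
    (hdΔ : d ≤ Δ - 1) (Lu : Finset (Fin q)) (Lw : Fin d → Finset (Fin q))
    (hLu : (q : ℝ) - (Δ : ℝ) + (d : ℝ) ≤ (Lu.card : ℝ))
    (hLw : ∀ t, (q : ℝ) - (Δ : ℝ) + 1 ≤ ((Lw t).card : ℝ))
    (c : Fin q) (hc : c ∈ Lu) :
    let Ω : Finset (Fin q × (Fin d → Fin q)) :=
      univ.filter (fun ω => ω.1 ∈ Lu ∧ ∀ t, ω.2 t ∈ Lw t ∧ ω.2 t ≠ ω.1)
    (d : ℝ) * Phi Δ q ≤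
      (((Ω.filter (fun ω => ω.1 ≠ c)).card : ℝ) / (Ω.card : ℝ)) /
        (((Ω.filter (fun ω => ω.1 = c)).card : ℝ) / (Ω.card : ℝ)) := by
  intro Ω
  -- `Ω` is `starColorings Lu Lw` up to the decidability instance of the filter
  have hΩ : Ω = starColorings Lu Lw := by simp only [Ω, starColorings]; congr
  rw [hΩ, starColorings_ratio_eq_sum Lw hc]
  have hdR : (1 : ℝ) ≤ d := by exact_mod_cast hd
  have hdΔR : (d : ℝ) ≤ Δ - 1 := by
    rw [← Nat.cast_one, ← Nat.cast_sub (by omega)]; exact_mod_cast hdΔ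
  have hqR : (Δ : ℝ) + 2 ≤ q := by exact_mod_cast hq
  set s := q - Δ + 1
  have hsL (t : Fin d) : s ≤ #(Lw t) := by
    have := hLw t
    rw [← Nat.cast_one, ← Nat.cast_sub (by omega), ← Nat.cast_add] at this
    exact_mod_cast this
  set b : ℝ := (1 - 1 / (s : ℝ)) ^ s
  have hb₀ : 0 < b := pow_pos (by rw [sub_pos, div_lt_one (by positivity)]; norm_cast; omega) _
  have hb₁ : b ≤ 1 := pow_le_one₀ (one_sub_inv_natCast_nonneg s) (by simp)
  set E := Lu.erase c
  set κ : ℝ := (q - 2) / (Δ - 1)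
  have hκ : 0 < d * κ := mul_pos (by linarith) (div_pos (by linarith) (by linarith))
  have hn : d * κ ≤ #E := by
    rw [card_erase_of_mem hc, Nat.cast_sub (card_pos.2 ⟨c, hc⟩), Nat.cast_one, mul_div_assoc',
      div_le_iff₀ (by linarith)]
    nlinarith
  calc (d : ℝ) * Phi Δ q = d * κ * b ^ (d / (d * κ)) := by
        rw [Phi_eq (by omega), div_mul_cancel_left₀ (by positivity)]; ring
    _ ≤ #E * b ^ ((d : ℝ) / #E) := mul_rpow_div_le_mul_rpow_div hb₀ hb₁ d.cast_nonneg hκ hn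
    _ = #E * (b ^ d) ^ (#E : ℝ)⁻¹ := by
        rw [← Real.rpow_natCast, ← Real.rpow_mul hb₀.le, div_eq_mul_inv]
    _ ≤ #E * (∏ x ∈ E, leafFactor Lw x) ^ (#E : ℝ)⁻¹ := by
        have := pow_le_prod_leafFactor (by omega) hsL E
        rw [Fintype.card_fin] at this
        gcongr
    _ ≤ ∑ x ∈ E, leafFactor Lw x :=
        card_mul_prod_rpow_inv_le_sum (card_pos.1 (by exact_mod_cast hκ.trans_le hn))
          fun x _ => leafFactor_nonneg Lw x
    _ ≤ _ := sum_le_sum fun x _ => leafFactor_le_prod_card_erase_div (fun t => by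
        have := hsL t; omega) x c

/-- Star centered at u with d ≥ 1 leaves, Δ ≥ 3, q ≥ Δ+2, d ≤ Δ−1, lists ⊆ [q]
with |L(u)| ≥ q−Δ+d and |L(w)| ≥ q−Δ+1 for each leaf w; σ uniform proper
list-coloring. Then P(σ_u ≠ c)/P(σ_u = c) ≥ d·Φ(Δ,q) for every c ∈ L(u). -/
theorem stmt_17 (d Δ q : ℕ) (hd : 1 ≤ d) (hΔ : 3 ≤ Δ) (hq : Δ + 2 ≤ q)
    (hdΔ : d ≤ Δ - 1) (Lu : Finset (Fin q)) (Lw : Fin d → Finset (Fin q))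
    (hLu : (q : ℝ) - (Δ : ℝ) + (d : ℝ) ≤ (Lu.card : ℝ))
    (hLw : ∀ t, (q : ℝ) - (Δ : ℝ) + 1 ≤ ((Lw t).card : ℝ))
    (c : Fin q) (hc : c ∈ Lu) :
    let Ω : Finset (Fin q × (Fin d → Fin q)) :=
      univ.filter (fun ω => ω.1 ∈ Lu ∧ ∀ t, ω.2 t ∈ Lw t ∧ ω.2 t ≠ ω.1)
    (d : ℝ) * Phi Δ q ≤
      (((Ω.filter (fun ω => ω.1 ≠ c)).card : ℝ) / (Ω.card : ℝ)) /
        (((Ω.filter (fun ω => ω.1 = c)).card : ℝ) / (Ω.card : ℝ)) :=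
  stmt_17_general d Δ q hd hq hdΔ Lu Lw hLu hLw c hc
end
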